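/- The stabilizer in G = GL2(k) × H of any point (A, ⟨t3, t4⟩) of the blow-up X̃ under the action (g,h)·(A, ⟨t3,t4⟩) = (gAh^{-1}, ⟨(t3,t4)g^T⟩) is the subgroup of pairs (λI2, λI2) with λ ∈ k*; hence the induced action of PG = G/St on X̃ is free. -/
import Mathlib


/-!
STATEMENT 8.  The stabilizer of any point (A, ⟨t3,t4⟩) of the blow-up X̃ under the
action of G = GL2(k) × H is {(λ·I2, λ·I2) : λ ∈ k*}; hence PG = G/St acts freely.

Setup.  A is a 2×2 matrix with first column linearly independent linear forms
z1, z2 and second column quadratic forms q1, q2 on P2, with det A ≠ 0 (so A ∈ X).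
An element of H is an upper triangular matrix (λ, z; 0, μ) with λμ ≠ 0 and z a linear
form.  The fixed-point condition g·A·h⁻¹ = A is written gA = Ah.  The blow-up X̃ of X
along the complete intersection X8 = {F1 = F2 = 0} is realised inside X × P1 by the
equation t3·F2(A) = t4·F1(A), where Fi(A) = qi(p(A)) and p(A) is the common zero of
z1, z2 (the cross product of their coefficient vectors).  The action on the P1
coordinate is ⟨t3,t4⟩ ↦ ⟨(t3,t4)·gᵀ⟩; fixing a projective point means mapping the
vector (t3,t4) to a nonzero multiple of itself.
-/

open MvPolynomial Matrix

variable {k : Type*} [Field k] [IsAlgClosed k] [CharZero k]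

/-- The coefficient vector of a linear form. -/
noncomputable def coeffvec (f : MvPolynomial (Fin 3) k) : Fin 3 → k :=
  fun i => coeff (Finsupp.single i 1) f

/-- Cross product in k³. -/
def crossv (v w : Fin 3 → k) : Fin 3 → k :=
  ![v 1 * w 2 - v 2 * w 1, v 2 * w 0 - v 0 * w 2, v 0 * w 1 - v 1 * w 0]

/-- for a point (A, ⟨t⟩) of the blow-up X̃ ⊂ X × P1, a pair
(g, h) ∈ G = GL2(k) × H (h = (λ, z; 0, μ)) fixes (A, ⟨t⟩) — i.e. gA = Ah and
(t3,t4)·gᵀ is proportional to (t3,t4) — if and only if g = λ0·I2 and h = λ0·I2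
(that is λ = μ = λ0, z = 0) for some λ0 ∈ k*.  In particular the stabilizer is
the subgroup {(λ·I2, λ·I2)} and PG = G/St acts freely on X̃. -/
theorem stabilizer_in_blowup
    (A : Matrix (Fin 2) (Fin 2) (MvPolynomial (Fin 3) k))
    (hlin : ∀ i, (A i 0).IsHomogeneous 1)
    (hquad : ∀ i, (A i 1).IsHomogeneous 2)
    (hindep : LinearIndependent k ![A 0 0, A 1 0])
    (hdet : A 0 0 * A 1 1 - A 1 0 * A 0 1 ≠ 0)
    (t : Fin 2 → k) (ht : t ≠ 0)
    -- (A, ⟨t⟩) lies on the blow-up X̃ ⊂ X × P1 of X along X8 = {F1 = F2 = 0}: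
    (hblow : t 0 * eval (crossv (coeffvec (A 0 0)) (coeffvec (A 1 0))) (A 1 1) =
             t 1 * eval (crossv (coeffvec (A 0 0)) (coeffvec (A 1 0))) (A 0 1))
    (g : Matrix (Fin 2) (Fin 2) k) (hg : IsUnit g.det)
    (lam mu : k) (hlam : lam ≠ 0) (hmu : mu ≠ 0)
    (z : MvPolynomial (Fin 3) k) (hz : z.IsHomogeneous 1) :
    (g.map (C : k → MvPolynomial (Fin 3) k) * A =
        A * !![C lam, z; 0, C mu] ∧
      ∃ c : k, c ≠ 0 ∧ Matrix.vecMul t g.transpose = c • t) ↔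
    ∃ l : k, l ≠ 0 ∧ g = l • (1 : Matrix (Fin 2) (Fin 2) k) ∧
      lam = l ∧ mu = l ∧ z = 0 := by
  constructor
  · rintro ⟨hA, -⟩
    have key : ∀ a b : k, C a * A 0 0 + C b * A 1 0 = 0 → a = 0 ∧ b = 0 := by
      intro a b h
      have h2 : ∀ i, ![a, b] i = 0 := by
        apply Fintype.linearIndependent_iff.mp hindep ![a, b]
        simp [Fin.sum_univ_two, MvPolynomial.smul_eq_C_mul, h]
      exact ⟨h2 0, h2 1⟩
    have h00 := congrFun (congrFun hA 0) 0
    have h10 := congrFun (congrFun hA 1) 0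
    have h01 := congrFun (congrFun hA 0) 1
    have h11 := congrFun (congrFun hA 1) 1
    simp [Matrix.mul_apply, Fin.sum_univ_two, Matrix.map_apply] at h00 h10 h01 h11
    have e1 : g 0 0 - lam = 0 ∧ g 0 1 = 0 := by
      apply key
      rw [map_sub]
      linear_combination h00
    have e2 : g 1 0 = 0 ∧ g 1 1 - lam = 0 := by
      apply key
      rw [map_sub]
      linear_combination h10
    have hg00 : g 0 0 = lam := sub_eq_zero.mp e1.1
    have hg11 : g 1 1 = lam := sub_eq_zero.mp e2.2
    rw [hg00, e1.2] at h01
    rw [e2.1, hg11] at h11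
    simp only [map_zero, zero_mul, add_zero, zero_add] at h01 h11
    have hlm : lam = mu := by
      have : (C lam - C mu) * (A 0 0 * A 1 1 - A 1 0 * A 0 1) = 0 := by
        linear_combination A 0 0 * h11 - A 1 0 * h01
      rcases mul_eq_zero.mp this with h | h
      · exact MvPolynomial.C_injective _ _ (sub_eq_zero.mp h)
      · exact absurd h hdet
    have hz0 : z = 0 := by
      have hz1 : A 0 0 * z = 0 := by
        rw [hlm] at h01
        linear_combination -h01
      rcases mul_eq_zero.mp hz1 with h | h
      · exact absurd h (hindep.ne_zero 0)
      · exact h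
    refine ⟨lam, hlam, ?_, rfl, hlm.symm, hz0⟩
    ext i j
    fin_cases i <;> fin_cases j <;>
      simp [hg00, hg11, e1.2, e2.1, Matrix.one_apply]
  · rintro ⟨l, hl, hgl, hll, hml, hz0⟩
    subst hgl hll hml hz0
    constructor
    · ext i j
      fin_cases i <;> fin_cases j <;>
        simp [Matrix.mul_apply, Fin.sum_univ_two, Matrix.one_apply, mul_comm]
    · exact ⟨_, hl, by ext i; fin_cases i <;> simp [Matrix.vecMul, dotProduct, Fin.sum_univ_two, Matrix.one_apply, mul_comm]⟩
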